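/- The value function V of the two-good problem is nonpositive and nonincreasing on [0, ∞): V(h₀) ≤ 0 for all h₀ ≥ 0, and V(h₂) ≤ V(h₁) whenever 0 ≤ h₁ < h₂. -/

import Mathlib

open MeasureTheory Real Set Filter

/-- State trajectory `h^{h₀,ℓ}(t) = e^{−φt} h₀ + φ ∫₀ᵗ e^{−φ(t−s)} ℓ(s) ds`. -/
noncomputable def traj (φ h₀ : ℝ) (ℓ : ℝ → ℝ) (t : ℝ) : ℝ :=
  Real.exp (-(φ * t)) * h₀ + φ * ∫ s in (0:ℝ)..t, Real.exp (-(φ * (t - s))) * ℓ s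

/-- Instantaneous utility of the two-good problem:
`U(ℓ, h) = ℓ^{1−σ} h^{γ(σ−1)} / (1−σ) + B̃ (1−ℓ)^{1−σ} / (1−σ)`, with `B̃ = B^{1−σ}`. -/
noncomputable def U2 (σ γ B ℓ h : ℝ) : ℝ :=
  ℓ ^ (1 - σ) * h ^ (γ * (σ - 1)) / (1 - σ) +
    B ^ (1 - σ) * (1 - ℓ) ^ (1 - σ) / (1 - σ)

/-- Admissible controls: measurable, with values in `[ℓ̲, ℓ̄]`. -/
def Admissible (lo hi : ℝ) (ℓ : ℝ → ℝ) : Prop :=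
  Measurable ℓ ∧ ∀ t, 0 ≤ t → ℓ t ∈ Set.Icc lo hi

/-- Value function of the two-good problem. -/
noncomputable def V (ρ φ σ γ B lo hi h₀ : ℝ) : ℝ :=
  sSup {x | ∃ ℓ : ℝ → ℝ, Admissible lo hi ℓ ∧
    x = ∫ t in Set.Ioi (0:ℝ), Real.exp (-(ρ * t)) * U2 σ γ B (ℓ t) (traj φ h₀ ℓ t)}

/-! `U2` is a sum of nonnegative terms divided by `1 - σ < 0`, hence nonpositive, and it depends on
`h` only through the increasing factor `h ^ (γ(σ-1))`, hence decreases in `h`; the trajectory is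
nonnegative and increasing in `h₀`. So every payoff is `≤ 0` and, for a fixed control, decreases in
`h₀`. Comparing payoffs needs them to be genuine integrals (a non-integrable Bochner integral is
`0`): the trajectory stays in `[0, max h₀ 1]`, where `U2` is bounded by compactness, so the
discounted utility is dominated by a multiple of `e^{-ρt}`. -/

section Utility

variable {σ γ B ℓ : ℝ}

lemma U2_nonpos (hσ : 1 ≤ σ) (hB : 0 ≤ B) (hℓ : ℓ ∈ Icc 0 1) {h : ℝ} (hh : 0 ≤ h) :
    U2 σ γ B ℓ h ≤ 0 := by
  have hden : 1 - σ ≤ 0 := by linarith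
  have h1ℓ : 0 ≤ 1 - ℓ := sub_nonneg.2 hℓ.2
  have hℓ0 := hℓ.1
  exact add_nonpos (div_nonpos_of_nonneg_of_nonpos (by positivity) hden)
    (div_nonpos_of_nonneg_of_nonpos (by positivity) hden)

lemma U2_antitoneOn (hσ : 1 ≤ σ) (hk : 0 ≤ γ * (σ - 1)) (hℓ : 0 ≤ ℓ) :
    AntitoneOn (U2 σ γ B ℓ) (Ici 0) := by
  intro h₁ hh₁ h₂ _ h12
  unfold U2
  gcongr ?_ + _
  refine div_le_div_of_nonpos_of_le (by linarith) ?_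
  gcongr

lemma exists_bound_U2 {lo hi : ℝ} (hlo : 0 < lo) (hhi : hi < 1) (hk : 0 ≤ γ * (σ - 1)) (M : ℝ) :
    ∃ C, ∀ ℓ ∈ Icc lo hi, ∀ h ∈ Icc 0 M, |U2 σ γ B ℓ h| ≤ C := by
  have hcont : ContinuousOn (fun p : ℝ × ℝ => U2 σ γ B p.1 p.2) (Icc lo hi ×ˢ Icc 0 M) := by
    rintro ⟨ℓ, h⟩ ⟨hℓ, -⟩
    have hℓ0 : ℓ ≠ 0 := (hlo.trans_le hℓ.1).ne'
    have h1ℓ : 1 - ℓ ≠ 0 := by linarith [hℓ.2]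
    apply ContinuousAt.continuousWithinAt
    unfold U2
    fun_prop (disch := first | exact Or.inl hℓ0 | exact Or.inl h1ℓ | exact Or.inr hk)
  obtain ⟨C, hC⟩ := (isCompact_Icc.prod isCompact_Icc).exists_bound_of_continuousOn hcont
  exact ⟨C, fun ℓ hℓ h hh => hC (ℓ, h) ⟨hℓ, hh⟩⟩

end Utility

section Trajectory

variable {φ h₀ t : ℝ} {ℓ ℓ' : ℝ → ℝ}

lemma traj_congr (ht : 0 ≤ t) (h : EqOn ℓ ℓ' (Icc 0 t)) : traj φ h₀ ℓ t = traj φ h₀ ℓ' t := by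
  unfold traj
  congr 2
  refine intervalIntegral.integral_congr fun s hs => ?_
  rw [uIcc_of_le ht] at hs
  simp only [h hs]

lemma monotone_traj_initial : Monotone fun h₀ => traj φ h₀ ℓ t := by
  intro a b hab
  simp only [traj]
  gcongr

lemma traj_nonneg (hφ : 0 ≤ φ) (hh₀ : 0 ≤ h₀) (ht : 0 ≤ t) (hℓ : ∀ s ∈ Icc 0 t, 0 ≤ ℓ s) :
    0 ≤ traj φ h₀ ℓ t :=
  add_nonneg (by positivity) <| mul_nonneg hφ <|
    intervalIntegral.integral_nonneg ht fun s hs => mul_nonneg (exp_nonneg _) (hℓ s hs)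

lemma integral_mul_exp_decay (φ t : ℝ) :
    ∫ s in (0:ℝ)..t, φ * exp (-(φ * (t - s))) = 1 - exp (-(φ * t)) := by
  have hderiv : ∀ s, HasDerivAt (fun s => exp (-(φ * (t - s)))) (φ * exp (-(φ * (t - s)))) s := by
    intro s
    convert (((hasDerivAt_id s).const_mul φ).sub_const (φ * t)).exp using 1
    · ext s; simp only [id]; ring_nf
    · simp only [id]; ring_nf
  rw [intervalIntegral.integral_eq_sub_of_hasDerivAt (fun s _ => hderiv s)
    ((by fun_prop : Continuous fun s => φ * exp (-(φ * (t - s)))).intervalIntegrable _ _)]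
  simp

lemma traj_le_max (hφ : 0 ≤ φ) (ht : 0 ≤ t) (hint : IntervalIntegrable ℓ volume 0 t)
    (hℓ : ∀ s ∈ Icc 0 t, ℓ s ≤ 1) : traj φ h₀ ℓ t ≤ max h₀ 1 := by
  have hI : φ * ∫ s in (0:ℝ)..t, exp (-(φ * (t - s))) * ℓ s ≤ 1 - exp (-(φ * t)) := by
    rw [← integral_mul_exp_decay, ← intervalIntegral.integral_const_mul]
    refine intervalIntegral.integral_mono_on ht ?_
      ((by fun_prop : Continuous fun s => φ * exp (-(φ * (t - s)))).intervalIntegrable _ _)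
      fun s hs => ?_
    · simpa only [mul_assoc] using
        hint.continuousOn_mul (g := fun s => φ * exp (-(φ * (t - s)))) (by fun_prop)
    · rw [← mul_assoc]
      exact mul_le_of_le_one_right (by positivity) (hℓ s hs)
  have he : exp (-(φ * t)) ≤ 1 := exp_le_one_iff.2 (by nlinarith)
  unfold traj
  nlinarith [le_max_left h₀ 1, le_max_right h₀ 1, exp_pos (-(φ * t))]

lemma traj_eq_exp_mul (φ h₀ : ℝ) (ℓ : ℝ → ℝ) (t : ℝ) :
    traj φ h₀ ℓ t = exp (-(φ * t)) * (h₀ + φ * ∫ s in (0:ℝ)..t, exp (φ * s) * ℓ s) := by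
  have hfactor : ∫ s in (0:ℝ)..t, exp (-(φ * (t - s))) * ℓ s
      = exp (-(φ * t)) * ∫ s in (0:ℝ)..t, exp (φ * s) * ℓ s := by
    rw [← intervalIntegral.integral_const_mul]
    refine intervalIntegral.integral_congr fun s _ => ?_
    rw [← mul_assoc, ← exp_add]
    ring_nf
  rw [traj, hfactor]
  ring

lemma continuous_traj (hℓ : ∀ a b, IntervalIntegrable ℓ volume a b) :
    Continuous (traj φ h₀ ℓ) := by
  have hprim := intervalIntegral.continuous_primitive
    (fun a b => (hℓ a b).continuousOn_mul (by fun_prop : Continuous fun s => exp (φ * s)).continuousOn) 0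
  rw [funext (traj_eq_exp_mul φ h₀ ℓ)]
  fun_prop

end Trajectory

noncomputable def discountedUtility (ρ φ σ γ B h₀ : ℝ) (ℓ : ℝ → ℝ) (t : ℝ) : ℝ :=
  exp (-(ρ * t)) * U2 σ γ B (ℓ t) (traj φ h₀ ℓ t)

section Payoff

variable {ρ φ σ γ B lo hi h₀ : ℝ} {ℓ : ℝ → ℝ}

lemma Admissible.traj_nonneg (hℓ : Admissible lo hi ℓ) (hlo : 0 ≤ lo) (hφ : 0 ≤ φ)
    (hh₀ : 0 ≤ h₀) {t : ℝ} (ht : 0 ≤ t) : 0 ≤ traj φ h₀ ℓ t :=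
  _root_.traj_nonneg hφ hh₀ ht fun s hs => hlo.trans (hℓ.2 s hs.1).1

lemma discountedUtility_nonpos (hℓ : Admissible lo hi ℓ) (hσ : 1 ≤ σ) (hB : 0 ≤ B) (hlo : 0 ≤ lo)
    (hhi : hi ≤ 1) (hφ : 0 ≤ φ) (hh₀ : 0 ≤ h₀) {t : ℝ} (ht : 0 ≤ t) :
    discountedUtility ρ φ σ γ B h₀ ℓ t ≤ 0 :=
  mul_nonpos_of_nonneg_of_nonpos (exp_nonneg _) <|
    U2_nonpos hσ hB ⟨hlo.trans (hℓ.2 t ht).1, (hℓ.2 t ht).2.trans hhi⟩ (hℓ.traj_nonneg hlo hφ hh₀ ht)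

lemma discountedUtility_anti (hℓ : Admissible lo hi ℓ) (hσ : 1 ≤ σ) (hk : 0 ≤ γ * (σ - 1))
    (hlo : 0 ≤ lo) (hφ : 0 ≤ φ) {h₁ h₂ : ℝ} (hh₁ : 0 ≤ h₁) (h12 : h₁ ≤ h₂) {t : ℝ} (ht : 0 ≤ t) :
    discountedUtility ρ φ σ γ B h₂ ℓ t ≤ discountedUtility ρ φ σ γ B h₁ ℓ t := by
  have htraj := hℓ.traj_nonneg hlo hφ hh₁ ht
  refine mul_le_mul_of_nonneg_left ?_ (exp_nonneg _)
  exact U2_antitoneOn hσ hk (hlo.trans (hℓ.2 t ht).1) htraj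
    (htraj.trans (monotone_traj_initial h12)) (monotone_traj_initial h12)

lemma integrableOn_discountedUtility (hℓ : Admissible lo hi ℓ) (hρ : 0 < ρ) (hφ : 0 ≤ φ)
    (hk : 0 ≤ γ * (σ - 1)) (hlo : 0 < lo) (hhi : hi < 1) (hh₀ : 0 ≤ h₀) :
    IntegrableOn (discountedUtility ρ φ σ γ B h₀ ℓ) (Ioi 0) := by
  obtain ⟨hm, hv⟩ := hℓ
  -- `ℓ` is only constrained on `[0, ∞)`; freezing it at `ℓ 0` for negative times makes it locally
  -- integrable without changing the integrand on `(0, ∞)`.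
  set ℓ' : ℝ → ℝ := fun s => ℓ (max s 0)
  have hv' : ∀ s, ℓ' s ∈ Icc lo hi := fun s => hv _ (le_max_right s 0)
  have hm' : Measurable ℓ' := hm.comp (measurable_id.max measurable_const)
  have heq : EqOn (discountedUtility ρ φ σ γ B h₀ ℓ') (discountedUtility ρ φ σ γ B h₀ ℓ) (Ioi 0) := by
    intro t ht
    have hℓℓ' : EqOn ℓ' ℓ (Icc 0 t) := fun s hs => by simp only [ℓ', max_eq_left hs.1]
    simp only [discountedUtility, hℓℓ' ⟨ht.le, le_rfl⟩, traj_congr ht.le hℓℓ']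
  refine IntegrableOn.congr_fun ?_ heq measurableSet_Ioi
  have hint : ∀ a b, IntervalIntegrable ℓ' volume a b := fun a b =>
    (intervalIntegrable_const (c := hi)).mono_fun' hm'.aestronglyMeasurable <|
      Eventually.of_forall fun s => (Real.norm_of_nonneg (hlo.le.trans (hv' s).1)).trans_le (hv' s).2
  obtain ⟨C, hC⟩ := exists_bound_U2 (B := B) hlo hhi hk (max h₀ 1)
  have hexp : IntegrableOn (fun t => exp (-(ρ * t))) (Ioi 0) := by
    simpa only [neg_mul] using exp_neg_integrableOn_Ioi 0 hρ
  have hmeas : Measurable fun t => U2 σ γ B (ℓ' t) (traj φ h₀ ℓ' t) := by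
    have := continuous_traj (φ := φ) (h₀ := h₀) hint
    unfold U2
    fun_prop
  refine hexp.mul_bdd (c := C) hmeas.aestronglyMeasurable ?_
  refine (ae_restrict_iff' measurableSet_Ioi).2 (Eventually.of_forall fun t ht => hC _ (hv' t) _ ⟨?_, ?_⟩)
  · exact traj_nonneg hφ hh₀ ht.le fun s _ => hlo.le.trans (hv' s).1
  · exact traj_le_max hφ ht.le (hint 0 t) fun s _ => (hv' s).2.trans hhi.le

end Payoff

theorem V_nonpos_antitone_general (ρ φ σ γ B lo hi : ℝ)
    (hρ : 0 < ρ) (hφ : 0 < φ) (hσ : 1 < σ)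
    (hγσ : 1 < γ * (σ - 1)) (hB : 0 < B) (hlo : 0 < lo) (hlohi : lo ≤ hi) (hhi : hi < 1) :
    (∀ h₀, 0 ≤ h₀ → V ρ φ σ γ B lo hi h₀ ≤ 0) ∧
      (∀ h₁ h₂, 0 ≤ h₁ → h₁ < h₂ → V ρ φ σ γ B lo hi h₂ ≤ V ρ φ σ γ B lo hi h₁) := by
  have hk : 0 ≤ γ * (σ - 1) := by linarith
  have payoff_nonpos : ∀ h₀, 0 ≤ h₀ → ∀ x ∈ {x | ∃ ℓ, Admissible lo hi ℓ ∧
      x = ∫ t in Ioi 0, discountedUtility ρ φ σ γ B h₀ ℓ t}, x ≤ 0 := by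
    rintro h₀ hh₀ _ ⟨ℓ, hℓ, rfl⟩
    exact setIntegral_nonpos measurableSet_Ioi fun t ht =>
      discountedUtility_nonpos hℓ hσ.le hB.le hlo.le hhi.le hφ.le hh₀ ht.le
  refine ⟨fun h₀ hh₀ => Real.sSup_le (payoff_nonpos h₀ hh₀) le_rfl, fun h₁ h₂ hh₁ h12 => ?_⟩
  refine csSup_le ⟨_, fun _ => lo, ⟨measurable_const, fun _ _ => ⟨le_rfl, hlohi⟩⟩, rfl⟩ ?_
  rintro _ ⟨ℓ, hℓ, rfl⟩
  refine le_trans ?_ (le_csSup ⟨0, payoff_nonpos h₁ hh₁⟩ ⟨ℓ, hℓ, rfl⟩)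
  have hh₂ : 0 ≤ h₂ := hh₁.trans h12.le
  exact setIntegral_mono_on (integrableOn_discountedUtility hℓ hρ hφ.le hk hlo hhi hh₂)
    (integrableOn_discountedUtility hℓ hρ hφ.le hk hlo hhi hh₁) measurableSet_Ioi fun t ht =>
      discountedUtility_anti hℓ hσ.le hk hlo.le hφ.le hh₁ h12.le ht.le

/-- the value function `V` of the two-good problem is nonpositive and
nonincreasing on `[0, ∞)`. -/
theorem V_nonpos_antitone (ρ φ σ γ B lo hi : ℝ)
    (hρ : 0 < ρ) (hφ : 0 < φ) (hσ : 1 < σ) (hγ0 : 0 < γ) (hγ1 : γ < 1)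
    (hγσ : 1 < γ * (σ - 1)) (hB : 0 < B) (hlo : 0 < lo) (hlohi : lo ≤ hi) (hhi : hi < 1) :
    (∀ h₀, 0 ≤ h₀ → V ρ φ σ γ B lo hi h₀ ≤ 0) ∧
      (∀ h₁ h₂, 0 ≤ h₁ → h₁ < h₂ → V ρ φ σ γ B lo hi h₂ ≤ V ρ φ σ γ B lo hi h₁) :=
  V_nonpos_antitone_general ρ φ σ γ B lo hi hρ hφ hσ hγσ hB hlo hlohi hhi
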